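/- For every integer k ≥ 0, there are no integers x, y, z satisfying 62 + 8k = (22 + 8k)·x² + 2x + y² + z². -/
import Mathlib

lemma aux8 : ∀ a b : ZMod 8, a ^ 2 + b ^ 2 ≠ 6 := by decide

lemma aux9 : ∀ a b : ZMod 9, a ^ 2 + b ^ 2 ≠ 6 := by decide

theorem stmt_3 (k : ℤ) (hk : 0 ≤ k) :
    ¬ ∃ x y z : ℤ, 62 + 8 * k = (22 + 8 * k) * x ^ 2 + 2 * x + y ^ 2 + z ^ 2 := by
  rintro ⟨x, y, z, h⟩
  rcases lt_trichotomy x 0 with hx | rfl | hx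
  · rcases eq_or_lt_of_le (by linarith : x ≤ -1) with rfl | hx2
    · -- y^2 + z^2 = 42, contradiction mod 9
      have e : y ^ 2 + z ^ 2 = 42 := by linarith
      have := congrArg (fun t : ℤ => (t : ZMod 9)) e
      push_cast at this
      have h42 : ((42 : ℤ) : ZMod 9) = 6 := by decide
      exact aux9 (y : ZMod 9) (z : ZMod 9) (by rw [this]; decide)
    · have hx4 : 4 ≤ x ^ 2 := by nlinarith
      have hxx : 2 * x ≥ -2 * x ^ 2 := by nlinarith
      nlinarith [sq_nonneg y, sq_nonneg z, mul_nonneg hk (le_trans (by norm_num) hx4)]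
  · -- y^2 + z^2 = 62 + 8k, contradiction mod 8
    have e : y ^ 2 + z ^ 2 = 62 + 8 * k := by linarith
    have := congrArg (fun t : ℤ => (t : ZMod 8)) e
    push_cast at this
    apply aux8 (y : ZMod 8) (z : ZMod 8)
    rw [this]
    have h8 : (8 : ZMod 8) = 0 := by decide
    rw [h8]
    ring_nf
    decide
  · rcases eq_or_lt_of_le (by linarith : 1 ≤ x) with rfl | hx2
    · have e : y ^ 2 + z ^ 2 = 38 := by linarith
      have := congrArg (fun t : ℤ => (t : ZMod 8)) e
      push_cast at this
      exact aux8 (y : ZMod 8) (z : ZMod 8) (by rw [this]; decide)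
    · have hx4 : 4 ≤ x ^ 2 := by nlinarith
      have hxx : 2 * x ≥ -2 * x ^ 2 := by nlinarith
      nlinarith [sq_nonneg y, sq_nonneg z, mul_nonneg hk (le_trans (by norm_num) hx4)]
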